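/- arXiv:2103.03942 — 3 statements merged into one kernel-verified Lean document; each statement's English description precedes it below -/
import Mathlib

section
/- Let p ≥ 5 be a prime. For the one-parameter family y² = x³ − t x² + (x − 1) t², the second-moment sum satisfies ∑_{t mod p} a_t(p)² = p² − 2p·δ_{2,3}(p) − 2p·χ(−3) − p·χ(−2) − (∑_{x mod p} χ(x³ − x² + x))², where a_t(p) := −∑_{x mod p} χ(x³ − t x² + x t² − t²). -/
/-!
For `t ≠ 0` the substitution `x ↦ t x` gives `a_t(p) = -∑ₓ χ(t g(x) - 1)` with
`g(x) = x³ - x² + x`, while `a_0(p) = -∑ₓ χ(x³) = 0`. Expanding the square and summing over `t`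
first, `∑ₜ χ((t A - 1)(t B - 1))` is a character sum over a quadratic polynomial in `t`, equal to
`p [A = B] - χ(A) χ(B)`. Hence the second moment is `p N - p² - (∑ₓ χ(g(x)))²`, where `N` counts
the pairs with `g(x) = g(y)`. As `g(x) - g(y) = (x - y)(x² + xy + y² - x - y + 1)`, these pairs
form the diagonal and a conic, and counting points on quadrics by the quadratic character gives
`N = 2p - 1 - χ(-3) - χ(-2)`. Finally `χ(-3) = 1 - 2 δ_{2,3}(p)` by quadratic reciprocity.
-/

open Finset

lemma three_ne_zero_of_ringChar_ne_three {R : Type*} [NonAssocSemiring R] [Nontrivial R]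
    (hR : ringChar R ≠ 3) : (3 : R) ≠ 0 := by
  rw [Ne, (by norm_cast : (3 : R) = (3 : ℕ)), ringChar.spec, Nat.dvd_prime Nat.prime_three]
  exact mt (or_iff_left hR).mp CharP.ringChar_ne_one

section FiniteField

variable {F : Type*} [Field F] [Fintype F]

local notation "q" => (Fintype.card F : ℤ)

lemma sum_comp_mul_add {M : Type*} [AddCommMonoid M] {u : F} (hu : u ≠ 0) (v : F) (f : F → M) :
    ∑ x, f (u * x + v) = ∑ x, f x :=
  ((Equiv.mulLeft₀ u hu).trans (Equiv.addRight v)).sum_comp f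

variable [DecidableEq F]

local notation "χ" => quadraticChar F

lemma quadraticChar_sum_mul_add_eq_neg_one (hF : ringChar F ≠ 2) {c : F} (hc : c ≠ 0) :
    ∑ x, χ x * χ (x + c) = -1 := by
  have hJ : ∑ v, χ v * χ (1 - v) = -χ (-1) := by
    simpa only [jacobiSum, (quadraticChar_isQuadratic F).inv] using
      jacobiSum_nontrivial_inv (quadraticChar_ne_one hF)
  have hc2 : χ c * χ c = 1 := by rw [← sq]; exact quadraticChar_sq_one hc
  have hm1 : χ (-1) * χ (-1) = 1 := by
    rw [← sq]; exact quadraticChar_sq_one (neg_ne_zero.2 one_ne_zero)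
  -- `x = -c v` turns the sum into `χ(-1)` times the Jacobi sum `J(χ, χ) = -χ(-1)`.
  calc ∑ x, χ x * χ (x + c) = ∑ v, χ (-c * v + 0) * χ (-c * v + 0 + c) :=
        (sum_comp_mul_add (neg_ne_zero.2 hc) 0 fun x ↦ χ x * χ (x + c)).symm
    _ = ∑ v, χ (-1) * (χ v * χ (1 - v)) := by
        refine sum_congr rfl fun v _ ↦ ?_
        rw [show -c * v + 0 + c = c * (1 - v) by ring, show -c * v + 0 = -1 * c * v by ring]
        simp only [map_mul]
        linear_combination (χ (-1) * χ v * χ (1 - v)) * hc2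
    _ = -1 := by rw [← mul_sum, hJ]; linear_combination -hm1

lemma sum_comp_sq (hF : ringChar F ≠ 2) (f : F → ℤ) :
    ∑ z, f (z ^ 2) = ∑ w, (χ w + 1) * f w := by
  rw [← sum_fiberwise univ (· ^ 2) fun z ↦ f (z ^ 2)]
  refine sum_congr rfl fun w _ ↦ ?_
  rw [sum_congr rfl fun z hz ↦ by rw [(mem_filter.1 hz).2], sum_const, nsmul_eq_mul,
    ← quadraticChar_card_sqrts hF w, Set.toFinset_ofPred]

lemma quadraticChar_sum_sq_sub (hF : ringChar F ≠ 2) {e : F} (he : e ≠ 0) :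
    ∑ z, χ (z ^ 2 - e) = -1 := by
  have hshift : ∑ w, χ (w + -e) = 0 := by
    simpa using (sum_comp_mul_add one_ne_zero (-e) χ).trans (quadraticChar_sum_zero hF)
  simp only [sub_eq_add_neg]
  rw [sum_comp_sq hF fun w ↦ χ (w + -e)]
  simp only [add_mul, one_mul, sum_add_distrib, hshift, add_zero]
  exact quadraticChar_sum_mul_add_eq_neg_one hF (neg_ne_zero.2 he)

lemma card_quadratic_eq_zero (hF : ringChar F ≠ 2) {a : F} (ha : a ≠ 0) (b c : F) :
    (#{x | a * (x * x) + b * x + c = 0} : ℤ) = χ (discrim a b c) + 1 := by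
  have : NeZero (2 : F) := ⟨Ring.two_ne_zero hF⟩
  simp_rw [quadratic_eq_zero_iff_discrim_eq_sq ha, eq_comm (a := discrim a b c)]
  rw [natCast_card_filter, sum_comp_mul_add (mul_ne_zero two_ne_zero ha) b
    fun z ↦ if z ^ 2 = discrim a b c then (1 : ℤ) else 0, ← natCast_card_filter,
    ← quadraticChar_card_sqrts hF, Set.toFinset_ofPred]

lemma quadraticChar_sum_quadratic (hF : ringChar F ≠ 2) {a b c : F} (ha : a ≠ 0)
    (hD : discrim a b c ≠ 0) : ∑ x, χ (a * (x * x) + b * x + c) = -χ a := by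
  have h2 : (2 : F) ≠ 0 := Ring.two_ne_zero hF
  have complete_square : ∀ x, χ a * χ (a * (x * x) + b * x + c)
      = χ ((2 * a * x + b) ^ 2 + -discrim a b c) := by
    intro x
    rw [show (2 * a * x + b) ^ 2 + -discrim a b c = 2 ^ 2 * (a * (a * (x * x) + b * x + c)) by
      rw [discrim]; ring, map_mul, quadraticChar_sq_one' h2, one_mul, map_mul]
  have hsum : χ a * ∑ x, χ (a * (x * x) + b * x + c) = -1 := by
    rw [mul_sum, sum_congr rfl fun x _ ↦ complete_square x,
      sum_comp_mul_add (mul_ne_zero h2 ha) b fun z ↦ χ (z ^ 2 + -discrim a b c)]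
    simpa only [sub_eq_add_neg] using quadraticChar_sum_sq_sub hF hD
  have hsq : χ a * χ a = 1 := by rw [← sq]; exact quadraticChar_sq_one ha
  linear_combination χ a * hsum - (∑ x, χ (a * (x * x) + b * x + c)) * hsq

lemma quadraticChar_sum_sq : ∑ s : F, χ (s ^ 2) = q - 1 := by
  have h : ∀ s : F, χ (s ^ 2) = 1 - if s = 0 then 1 else 0 := by
    intro s
    split_ifs with hs
    · simp [hs]
    · rw [quadraticChar_sq_one' hs, sub_zero]
  simp [h, sum_sub_distrib]

lemma quadraticChar_sum_mul_sub_one_mul_sub_one (hF : ringChar F ≠ 2) (A B : F) :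
    ∑ t, χ ((t * A - 1) * (t * B - 1)) = (if A = B then q else 0) - χ A * χ B := by
  have zero_left : ∀ B : F,
      ∑ t, χ ((t * 0 - 1) * (t * B - 1)) = (if 0 = B then q else 0) - χ 0 * χ B := by
    intro B
    rcases eq_or_ne B 0 with rfl | hB
    · simp
    · rw [if_neg hB.symm, MulChar.map_zero, zero_mul, sub_zero,
        ← quadraticChar_sum_zero hF, ← sum_comp_mul_add (neg_ne_zero.2 hB) 1 χ]
      exact sum_congr rfl fun t _ ↦ by ring_nf
  rcases eq_or_ne A 0 with rfl | hA
  · exact zero_left B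
  rcases eq_or_ne B 0 with rfl | hB
  · simpa only [mul_comm, eq_comm] using zero_left A
  rcases eq_or_ne A B with rfl | hAB
  · rw [if_pos rfl, ← sq, ← map_pow, quadraticChar_sq_one' hA, ← quadraticChar_sum_sq,
      ← sum_comp_mul_add hA (-1) fun s ↦ χ (s ^ 2)]
    exact sum_congr rfl fun t _ ↦ by ring_nf
  · have hD : discrim (A * B) (-(A + B)) 1 ≠ 0 := by
      rw [show discrim (A * B) (-(A + B)) 1 = (A - B) ^ 2 by rw [discrim]; ring]
      exact pow_ne_zero 2 (sub_ne_zero.2 hAB)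
    rw [if_neg hAB, zero_sub, ← map_mul,
      ← quadraticChar_sum_quadratic hF (mul_ne_zero hA hB) hD]
    exact sum_congr rfl fun t _ ↦ by ring_nf

lemma sum_sq_sum_quadraticChar_mul_sub_one (hF : ringChar F ≠ 2) (g : F → F) :
    ∑ t, (∑ x, χ (t * g x - 1)) ^ 2
      = q * #{xy : F × F | g xy.1 = g xy.2} - (∑ x, χ (g x)) ^ 2 := by
  calc ∑ t, (∑ x, χ (t * g x - 1)) ^ 2
      = ∑ t, ∑ x, ∑ y, χ ((t * g x - 1) * (t * g y - 1)) := by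
        simp only [sq, sum_mul_sum, map_mul]
    _ = ∑ x, ∑ y, ∑ t, χ ((t * g x - 1) * (t * g y - 1)) := by
        rw [sum_comm]; exact sum_congr rfl fun x _ ↦ sum_comm
    _ = ∑ x, ∑ y, ((if g x = g y then q else 0) - χ (g x) * χ (g y)) := by
        simp only [quadraticChar_sum_mul_sub_one_mul_sub_one hF]
    _ = q * #{xy : F × F | g xy.1 = g xy.2} - (∑ x, χ (g x)) ^ 2 := by
        rw [sq, sum_mul_sum, natCast_card_filter, Fintype.sum_prod_type, mul_sum]
        simp only [sum_sub_distrib, mul_sum, mul_ite, mul_one, mul_zero]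

lemma card_pairs_cubic_eq_cubic (hF : ringChar F ≠ 2) (hF3 : ringChar F ≠ 3) :
    (#{xy : F × F | xy.1 ^ 3 - xy.1 ^ 2 + xy.1 = xy.2 ^ 3 - xy.2 ^ 2 + xy.2} : ℤ)
      = 2 * q - 1 - χ (-3) - χ (-2) := by
  have h2 : (2 : F) ≠ 0 := Ring.two_ne_zero hF
  have h3 : (3 : F) ≠ 0 := three_ne_zero_of_ringChar_ne_three hF3
  set Q : F → F → F := fun x y ↦ 1 * (y * y) + (x - 1) * y + (x ^ 2 - x + 1) with hQ
  have factor : ∀ x y : F, x ^ 3 - x ^ 2 + x = y ^ 3 - y ^ 2 + y ↔ x = y ∨ Q x y = 0 := by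
    intro x y
    rw [← sub_eq_zero, show x ^ 3 - x ^ 2 + x - (y ^ 3 - y ^ 2 + y) = (x - y) * Q x y by ring,
      mul_eq_zero, sub_eq_zero]
  have diagonal : (#{xy : F × F | xy.1 = xy.2} : ℤ) = q := by
    rw [natCast_card_filter, Fintype.sum_prod_type]
    simp
  have conic : (#{xy : F × F | Q xy.1 xy.2 = 0} : ℤ) = q - χ (-3) := by
    have hdisc : ∀ x : F, discrim 1 (x - 1) (x ^ 2 - x + 1) = -3 * (x * x) + 2 * x + -3 := by
      intro x; rw [discrim]; ring
    have hD : discrim (-3 : F) 2 (-3) ≠ 0 := by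
      rw [show discrim (-3 : F) 2 (-3) = -2 ^ 5 by rw [discrim]; ring]
      exact neg_ne_zero.2 (pow_ne_zero 5 h2)
    rw [natCast_card_filter, Fintype.sum_prod_type]
    simp only [hQ, ← natCast_card_filter, card_quadratic_eq_zero hF one_ne_zero, sum_add_distrib,
      hdisc, quadraticChar_sum_quadratic hF (neg_ne_zero.2 h3) hD, sum_const, card_univ,
      nsmul_eq_mul, mul_one]
    ring
  have conic_diagonal : (#{xy : F × F | xy.1 = xy.2 ∧ Q xy.1 xy.2 = 0} : ℤ) = χ (-2) + 1 := by
    have hQ_diag : ∀ x : F, Q x x = 3 * (x * x) + -2 * x + 1 := fun x ↦ by ring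
    have hD : discrim (3 : F) (-2) 1 = -2 * 2 ^ 2 := by rw [discrim]; ring
    rw [natCast_card_filter, Fintype.sum_prod_type]
    simp only [ite_and, sum_ite_eq, mem_univ, if_true]
    rw [← natCast_card_filter]
    simp only [hQ_diag]
    rw [card_quadratic_eq_zero hF h3, hD, map_mul, quadraticChar_sq_one' h2, mul_one]
  have incl_excl := congrArg (Nat.cast : ℕ → ℤ) (card_union_add_card_inter
    ({xy : F × F | xy.1 = xy.2} : Finset _) {xy : F × F | Q xy.1 xy.2 = 0})
  rw [← filter_or, ← filter_and, ← filter_congr fun xy _ ↦ factor xy.1 xy.2] at incl_excl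
  push_cast at incl_excl
  rw [diagonal, conic, conic_diagonal] at incl_excl
  linear_combination incl_excl

theorem sum_sq_sum_quadraticChar_cubic_family (hF : ringChar F ≠ 2) (hF3 : ringChar F ≠ 3) :
    ∑ t : F, (∑ x, χ (x ^ 3 - t * x ^ 2 + x * t ^ 2 - t ^ 2)) ^ 2
      = q ^ 2 - q - q * χ (-3) - q * χ (-2) - (∑ x, χ (x ^ 3 - x ^ 2 + x)) ^ 2 := by
  have rescale : ∀ t : F, t ≠ 0 → ∑ x, χ (x ^ 3 - t * x ^ 2 + x * t ^ 2 - t ^ 2)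
      = ∑ x, χ (t * (x ^ 3 - x ^ 2 + x) - 1) := by
    intro t ht
    rw [← sum_comp_mul_add ht 0]
    refine sum_congr rfl fun x _ ↦ ?_
    rw [show (t * x + 0) ^ 3 - t * (t * x + 0) ^ 2 + (t * x + 0) * t ^ 2 - t ^ 2
        = t ^ 2 * (t * (x ^ 3 - x ^ 2 + x) - 1) by ring, map_mul, quadraticChar_sq_one' ht, one_mul]
  have at_zero : ∑ x : F, χ (x ^ 3 - 0 * x ^ 2 + x * 0 ^ 2 - 0 ^ 2) = 0 := by
    rw [← quadraticChar_sum_zero hF]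
    refine sum_congr rfl fun x _ ↦ ?_
    rcases quadraticChar_isQuadratic F x with h | h | h <;> simp [map_pow, h]
  have rescaled_at_zero : (∑ x : F, χ (0 * (x ^ 3 - x ^ 2 + x) - 1)) ^ 2 = q ^ 2 := by
    simp only [zero_mul, zero_sub, sum_const, card_univ, nsmul_eq_mul, mul_pow,
      quadraticChar_sq_one (neg_ne_zero.2 (one_ne_zero' F)), mul_one]
  have rescaled := add_sum_erase univ
    (fun t : F ↦ (∑ x, χ (t * (x ^ 3 - x ^ 2 + x) - 1)) ^ 2) (mem_univ 0)
  rw [rescaled_at_zero, sum_sq_sum_quadraticChar_mul_sub_one hF,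
    card_pairs_cubic_eq_cubic hF hF3] at rescaled
  rw [← add_sum_erase _ _ (mem_univ 0), at_zero,
    sum_congr rfl fun t ht ↦ by rw [rescale t (ne_of_mem_erase ht)]]
  linear_combination rescaled

end FiniteField

lemma quadraticChar_zmod_neg_three {p : ℕ} [hp : Fact p.Prime] (hp2 : p ≠ 2) (hp3 : p ≠ 3) :
    quadraticChar (ZMod p) (-3) = if p % 3 = 2 then -1 else 1 := by
  have hodd : Odd p := hp.out.odd_of_ne_two hp2
  have h3 : ¬ 3 ∣ p := fun h ↦
    hp3 ((Nat.prime_dvd_prime_iff_eq Nat.prime_three hp.out).1 h).symm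
  have h12 : p % 12 = 1 ∨ p % 12 = 5 ∨ p % 12 = 7 ∨ p % 12 = 11 := by
    have := Nat.odd_iff.1 hodd
    omega
  rw [show (-3 : ZMod p) = ((-3 : ℤ) : ZMod p) by push_cast; rfl, ← legendreSym,
    jacobiSym.legendreSym.to_jacobiSym, jacobiSym.mod_right _ hodd]
  norm_num
  rcases h12 with h | h | h | h <;> simp only [h] <;> norm_num <;> omega

/-- For a prime `p ≥ 5` and the family `y² = x³ - t x² + (x - 1) t²`,
the second-moment sum equals
`p² - 2p δ_{2,3}(p) - 2p χ(-3) - p χ(-2) - (∑_{x mod p} χ(x³ - x² + x))²`. -/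
theorem second_moment_family_two (p : ℕ) [Fact p.Prime] (hp : 5 ≤ p) :
    ∑ t : ZMod p,
      (-∑ x : ZMod p,
        legendreSym p ((x.val : ℤ) ^ 3 - (t.val : ℤ) * (x.val : ℤ) ^ 2
          + (x.val : ℤ) * (t.val : ℤ) ^ 2 - (t.val : ℤ) ^ 2)) ^ 2 =
      (p : ℤ) ^ 2 - 2 * (p : ℤ) * (if p % 3 = 2 then 1 else 0)
        - 2 * (p : ℤ) * legendreSym p (-3) - (p : ℤ) * legendreSym p (-2)
        - (∑ x : ZMod p,
            legendreSym p ((x.val : ℤ) ^ 3 - (x.val : ℤ) ^ 2 + (x.val : ℤ))) ^ 2 := by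
  have hp2 : ringChar (ZMod p) ≠ 2 := by rw [ZMod.ringChar_zmod_n]; omega
  have hp3 : ringChar (ZMod p) ≠ 3 := by rw [ZMod.ringChar_zmod_n]; omega
  simp only [legendreSym, neg_sq]
  push_cast
  simp only [ZMod.natCast_val, ZMod.cast_id', id]
  rw [sum_sq_sum_quadraticChar_cubic_family hp2 hp3, ZMod.card,
    quadraticChar_zmod_neg_three (by omega) (by omega)]
  split_ifs <;> ring
end

section
/- Let p > 3 be a prime. For the one-parameter family y² = x³ + t x² + t x + t², the second-moment sum satisfies ∑_{t mod p} a_t(p)² = p² − p − 1 − 2p·δ_{1,4}(p), where a_t(p) := −∑_{x mod p} χ(x³ + t x² + t x + t²). -/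
/-!
Write `χ` for the quadratic character and `x³ + t x² + t x + t² = (x + t)(x² + t)`.
Substituting `x ↦ t / x` shows `-a_t = 1 + C(t)` for every `t`, where
`C(t) = ∑ₓ χ(x (x + 1)) χ(x² + t)`. Summing over `t`, `∑ₜ C(t) = 0`, and by
`∑ₜ χ((a + t)(b + t)) = p [a = b] - 1` the second moment of `C` reduces to the pairs
`y = ±x`, which are evaluated with the same quadratic character sum. This gives
`∑ₜ a_t² = p² - 2p - 1 - p χ(-1)`, and `χ(-1)` is decided by `p mod 4`.
-/

open Finset

section QuadraticCharSums

variable {F : Type*} [Field F] [Fintype F]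

theorem sum_comp_mul_inv {M : Type*} [AddCommMonoid M] {c : F} (hc : c ≠ 0) (f : F → M) :
    ∑ x : F, f (c * x⁻¹) = ∑ x : F, f x :=
  Equiv.sum_comp ((Equiv.inv F).trans (Equiv.mulLeft₀ c hc)) f

variable [DecidableEq F]

theorem quadraticChar_sq_mul {c : F} (hc : c ≠ 0) (b : F) :
    quadraticChar F (c ^ 2 * b) = quadraticChar F b := by
  rw [map_mul, quadraticChar_sq_one' hc, one_mul]

theorem sum_quadraticChar_sq_mul (h : F → ℤ) :
    ∑ x : F, quadraticChar F (x ^ 2) * h x = ∑ x : F, h x - h 0 := by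
  rw [Fintype.sum_eq_add_sum_compl 0, Fintype.sum_eq_add_sum_compl 0 h]
  have hcompl : ∀ x ∈ ({0}ᶜ : Finset F), quadraticChar F (x ^ 2) * h x = h x := fun x hx => by
    rw [quadraticChar_sq_one' (by simpa using hx), one_mul]
  rw [sum_congr rfl hcompl]
  simp

theorem quadraticChar_sum_add_left (hF : ringChar F ≠ 2) (c : F) :
    ∑ x : F, quadraticChar F (c + x) = 0 := by
  rw [← quadraticChar_sum_zero hF]
  exact Equiv.sum_comp (Equiv.addLeft c) (quadraticChar F)

theorem quadraticChar_sum_mul_add (hF : ringChar F ≠ 2) {d : F} (hd : d ≠ 0) :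
    ∑ x : F, quadraticChar F (x * (x + d)) = -1 := by
  have hfactor : ∀ x : F, x * (x + d) = x ^ 2 * (1 + d * x⁻¹) := fun x => by
    rcases eq_or_ne x 0 with rfl | hx
    · simp
    · field_simp
  simp only [hfactor, map_mul]
  rw [sum_quadraticChar_sq_mul, sum_comp_mul_inv hd (fun y => quadraticChar F (1 + y)),
    quadraticChar_sum_add_left hF]
  simp

theorem quadraticChar_sum_add_mul_add (hF : ringChar F ≠ 2) (a b : F) :
    ∑ x : F, quadraticChar F ((a + x) * (b + x))
      = if a = b then (Fintype.card F : ℤ) - 1 else -1 := by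
  have hshift : ∀ x : F, (a + x) * (b + x) = (a + x) * ((a + x) + (b - a)) := fun x => by ring
  simp only [hshift]
  rw [Fintype.sum_equiv (Equiv.addLeft a)
    (fun x => quadraticChar F ((a + x) * (a + x + (b - a))))
    (fun y => quadraticChar F (y * (y + (b - a)))) fun _ => rfl]
  split_ifs with hab
  · have h := sum_quadraticChar_sq_mul (F := F) (fun _ => 1)
    simp only [mul_one, sum_const, card_univ, nsmul_eq_mul] at h
    simpa [hab, sq] using h
  · exact quadraticChar_sum_mul_add hF (sub_ne_zero.mpr (Ne.symm hab))

theorem sum_sq_sum_mul_quadraticChar_add (hF : ringChar F ≠ 2) (w : F → ℤ) (g : F → F) :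
    ∑ t : F, (∑ x : F, w x * quadraticChar F (g x + t)) ^ 2
      = Fintype.card F * ∑ x : F, ∑ y : F, (if g x = g y then w x * w y else 0)
        - (∑ x : F, w x) ^ 2 := by
  calc ∑ t : F, (∑ x : F, w x * quadraticChar F (g x + t)) ^ 2
      = ∑ x : F, ∑ y : F, w x * w y * ∑ t : F, quadraticChar F ((g x + t) * (g y + t)) := by
        simp_rw [sq, sum_mul_sum, map_mul, mul_sum]
        rw [sum_comm]
        refine sum_congr rfl fun x _ => ?_
        rw [sum_comm]
        refine sum_congr rfl fun y _ => sum_congr rfl fun t _ => ?_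
        ring
    _ = ∑ x : F, ∑ y : F,
          (Fintype.card F * (if g x = g y then w x * w y else 0) - w x * w y) := by
        simp_rw [quadraticChar_sum_add_mul_add hF]
        refine sum_congr rfl fun x _ => sum_congr rfl fun y _ => ?_
        split_ifs <;> ring
    _ = _ := by
        simp only [sum_sub_distrib, ← mul_sum, sum_mul_sum, sq]

theorem sum_ite_sq_eq_sq {M : Type*} [AddCommMonoid M] (hF : ringChar F ≠ 2) {x : F}
    (hx : x ≠ 0) (f : F → M) : ∑ y : F, (if x ^ 2 = y ^ 2 then f y else 0) = f x + f (-x) := by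
  have hneg : x ≠ -x := fun h => hx ((Ring.eq_self_iff_eq_zero_of_char_ne_two hF).mp h.symm)
  have hroots : univ.filter (fun y : F => x ^ 2 = y ^ 2) = {x, -x} := by
    ext y
    simp [eq_comm (a := x ^ 2), sq_eq_sq_iff_eq_or_eq_neg]
  rw [← sum_filter, hroots, sum_pair hneg]

end QuadraticCharSums

section Family

variable {F : Type*} [Field F] [Fintype F] [DecidableEq F]

/-- `-a_t`, using `x³ + t x² + t x + t² = (x + t)(x² + t)`. -/
def familySum (t : F) : ℤ :=
  ∑ x : F, quadraticChar F ((x + t) * (x ^ 2 + t))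

def twistedSum (t : F) : ℤ :=
  ∑ x : F, quadraticChar F (x * (x + 1)) * quadraticChar F (x ^ 2 + t)

theorem twistedSum_zero (hF : ringChar F ≠ 2) : twistedSum (0 : F) = -1 := by
  unfold twistedSum
  simp_rw [add_zero, mul_comm (quadraticChar F (_ * _))]
  rw [sum_quadraticChar_sq_mul, quadraticChar_sum_mul_add hF one_ne_zero]
  simp

theorem sum_twistedSum (hF : ringChar F ≠ 2) : ∑ t : F, twistedSum t = 0 := by
  unfold twistedSum
  rw [sum_comm]
  simp_rw [← mul_sum, quadraticChar_sum_add_left hF, mul_zero, sum_const_zero]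

theorem familySum_zero (hF : ringChar F ≠ 2) : familySum (0 : F) = 0 := by
  unfold familySum
  have hcube : ∀ x : F, (x + 0) * (x ^ 2 + 0) = x ^ 2 * x := fun x => by ring
  simp_rw [hcube, map_mul]
  rw [sum_quadraticChar_sq_mul, quadraticChar_sum_zero hF]
  simp

theorem familySum_eq_one_add_twistedSum (hF : ringChar F ≠ 2) (t : F) :
    familySum t = 1 + twistedSum t := by
  rcases eq_or_ne t 0 with rfl | ht
  · rw [familySum_zero hF, twistedSum_zero hF]
    norm_num
  unfold familySum twistedSum
  have hat_zero : quadraticChar F ((t * 0⁻¹ + t) * ((t * 0⁻¹) ^ 2 + t)) = 1 := by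
    rw [inv_zero, mul_zero, zero_add, zero_pow two_ne_zero, zero_add, ← sq,
      quadraticChar_sq_one' ht]
  have hterm : ∀ x : F,
      quadraticChar F (x ^ 2) * quadraticChar F ((t * x⁻¹ + t) * ((t * x⁻¹) ^ 2 + t))
        = quadraticChar F (x * (x + 1)) * quadraticChar F (x ^ 2 + t) := fun x => by
    rcases eq_or_ne x 0 with rfl | hx
    · simp
    have hscale : (t * x⁻¹ + t) * ((t * x⁻¹) ^ 2 + t)
        = (t * x⁻¹ ^ 2) ^ 2 * (x * (x + 1) * (x ^ 2 + t)) := by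
      field_simp
      ring
    rw [quadraticChar_sq_one' hx, one_mul, hscale,
      quadraticChar_sq_mul (mul_ne_zero ht (pow_ne_zero 2 (inv_ne_zero hx))), map_mul]
  rw [← sum_comp_mul_inv ht (fun x => quadraticChar F ((x + t) * (x ^ 2 + t))),
    ← sum_congr rfl fun x _ => hterm x, sum_quadraticChar_sq_mul, hat_zero]
  ring

theorem sum_twistedSum_sq (hF : ringChar F ≠ 2) :
    ∑ t : F, twistedSum t ^ 2
      = Fintype.card F * (Fintype.card F - 3 - quadraticChar F (-1)) - 1 := by
  let w : F → ℤ := fun x => quadraticChar F (x * (x + 1))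
  have hdiag : ∑ x : F, ∑ y : F, (if x ^ 2 = y ^ 2 then w x * w y else 0)
      = Fintype.card F - 3 - quadraticChar F (-1) := by
    calc ∑ x : F, ∑ y : F, (if x ^ 2 = y ^ 2 then w x * w y else 0)
        = ∑ x : F, w x * (w x + w (-x)) := by
          refine sum_congr rfl fun x _ => ?_
          rcases eq_or_ne x 0 with rfl | hx
          · simp [w]
          simp_rw [← mul_ite_zero, ← mul_sum, sum_ite_sq_eq_sq hF hx]
      _ = ∑ x : F, quadraticChar F (x ^ 2)
            * (quadraticChar F ((1 + x) * (1 + x)) + quadraticChar F ((1 + x) * (-1 + x))) := by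
          refine sum_congr rfl fun x _ => ?_
          simp only [w, mul_add, ← map_mul]
          congr 2 <;> ring
      _ = Fintype.card F - 3 - quadraticChar F (-1) := by
          rw [sum_quadraticChar_sq_mul, sum_add_distrib, quadraticChar_sum_add_mul_add hF,
            quadraticChar_sum_add_mul_add hF, if_pos rfl,
            if_neg (Ring.neg_one_ne_one_of_char_ne_two hF).symm]
          simp only [add_zero, one_mul, map_one]
          ring
  unfold twistedSum
  rw [sum_sq_sum_mul_quadraticChar_add hF w (· ^ 2), hdiag,
    quadraticChar_sum_mul_add hF one_ne_zero]
  ring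

theorem sum_familySum_sq (hF : ringChar F ≠ 2) :
    ∑ t : F, familySum t ^ 2 = (Fintype.card F : ℤ) ^ 2 - 2 * Fintype.card F - 1
      - Fintype.card F * quadraticChar F (-1) := by
  calc ∑ t : F, familySum t ^ 2
      = ∑ t : F, (1 + 2 * twistedSum t + twistedSum t ^ 2) := by
        refine sum_congr rfl fun t _ => ?_
        rw [familySum_eq_one_add_twistedSum hF]
        ring
    _ = Fintype.card F + 2 * ∑ t : F, twistedSum t + ∑ t : F, twistedSum t ^ 2 := by
        rw [sum_add_distrib, sum_add_distrib, ← mul_sum]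
        simp
    _ = _ := by
        rw [sum_twistedSum hF, sum_twistedSum_sq hF]
        ring

end Family

/-- For a prime `p > 3` and the family `y² = x³ + t x² + t x + t²`,
the second-moment sum equals `p² - p - 1 - 2p δ_{1,4}(p)`. -/
theorem second_moment_family_four (p : ℕ) [Fact p.Prime] (hp : 3 < p) :
    ∑ t : ZMod p,
      (-∑ x : ZMod p,
        legendreSym p ((x.val : ℤ) ^ 3 + (t.val : ℤ) * (x.val : ℤ) ^ 2
          + (t.val : ℤ) * (x.val : ℤ) + (t.val : ℤ) ^ 2)) ^ 2 =
      (p : ℤ) ^ 2 - (p : ℤ) - 1 - 2 * (p : ℤ) * (if p % 4 = 1 then 1 else 0) := by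
  have hF : ringChar (ZMod p) ≠ 2 := by
    rw [ZMod.ringChar_zmod_n]
    omega
  have hfactor : ∀ t x : ZMod p,
      legendreSym p ((x.val : ℤ) ^ 3 + (t.val : ℤ) * (x.val : ℤ) ^ 2
        + (t.val : ℤ) * (x.val : ℤ) + (t.val : ℤ) ^ 2)
        = quadraticChar (ZMod p) ((x + t) * (x ^ 2 + t)) := fun t x => by
    unfold legendreSym
    congr 1
    push_cast [ZMod.natCast_val, ZMod.cast_id]
    ring
  simp only [hfactor, neg_sq]
  change ∑ t : ZMod p, familySum t ^ 2 = _
  rw [sum_familySum_sq hF, quadraticChar_neg_one hF, ZMod.card]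
  have hodd : p % 2 = 1 := ((Fact.out : p.Prime).eq_two_or_odd).resolve_left (by omega)
  rcases Nat.odd_mod_four_iff.mp hodd with h | h
  · rw [ZMod.χ₄_nat_one_mod_four h, if_pos h]
    ring
  · rw [ZMod.χ₄_nat_three_mod_four h, if_neg (by omega)]
    ring
end

section
/- Let p > 3 be a prime. For the one-parameter family y² = x³ − t² x + t⁴, the first-moment sum satisfies ∑_{t mod p} a_t(p) = −2p, where a_t(p) := −∑_{x mod p} χ(x³ − t² x + t⁴). -/
/-!
Rescaling `x = t²u` (for `t ≠ 0`) turns the double sum into `∑_u ∑_t χ(u³t² + (1 - u))`, and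
for `t = 0` both forms vanish. For `u ∉ {0, 1}` the inner sum is `∑_t χ(at² + b) = -χ(a)` with
`a = u³`, `b = 1 - u`, computed by counting square roots and the Jacobi sum `J(χ, χ) = -χ(-1)`;
the two degenerate columns `u = 0` and `u = 1` contribute `p` and `p - 1`, and
`-∑_{u ∉ {0,1}} χ(u) = 1`.
-/

open Finset

section QuadraticCharSums

variable {F : Type*} [Field F] [Fintype F] [DecidableEq F]

lemma quadraticChar_pow_three (x : F) : quadraticChar F (x ^ 3) = quadraticChar F x := by
  rw [map_pow, ← MulChar.pow_apply' _ three_ne_zero,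
    (quadraticChar_isQuadratic F).pow_odd (by decide)]

lemma sum_quadraticChar_sq : ∑ t : F, quadraticChar F (t ^ 2) = Fintype.card F - 1 := by
  simp_rw [map_pow, ← MulChar.pow_apply' _ two_ne_zero, (quadraticChar_isQuadratic F).sq_eq_one,
    MulChar.sum_one_eq_card_units, Fintype.card_units, Nat.cast_sub Fintype.card_pos, Nat.cast_one]

lemma sum_quadraticChar_affine (hF : ringChar F ≠ 2) {a : F} (ha : a ≠ 0) (b : F) :
    ∑ s : F, quadraticChar F (a * s + b) = 0 := by
  rw [← quadraticChar_sum_zero hF]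
  exact Fintype.sum_equiv ((Equiv.mulLeft₀ a ha).trans (Equiv.addRight b)) _ _ fun _ ↦ rfl

lemma sum_comp_sq_eq_sum_quadraticChar_add_one_mul (hF : ringChar F ≠ 2) (f : F → ℤ) :
    ∑ t : F, f (t ^ 2) = ∑ s : F, (quadraticChar F s + 1) * f s := by
  rw [← sum_fiberwise univ (· ^ 2) (f <| · ^ 2)]
  refine sum_congr rfl fun s _ ↦ ?_
  rw [← quadraticChar_card_sqrts hF s, sum_congr rfl fun t ht ↦ congrArg f (mem_filter.mp ht).2,
    sum_const, nsmul_eq_mul, Set.toFinset_ofPred]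

lemma sum_quadraticChar_mul_quadraticChar_one_sub (hF : ringChar F ≠ 2) :
    ∑ x : F, quadraticChar F x * quadraticChar F (1 - x) = -quadraticChar F (-1) := by
  have h := jacobiSum_nontrivial_inv (quadraticChar_ne_one hF)
  rwa [(quadraticChar_isQuadratic F).inv] at h

lemma sum_quadraticChar_mul_quadraticChar_affine (hF : ringChar F ≠ 2) {a b : F} (ha : a ≠ 0)
    (hb : b ≠ 0) :
    ∑ s : F, quadraticChar F s * quadraticChar F (a * s + b) = -quadraticChar F a := by
  have hc : -b / a ≠ 0 := div_ne_zero (neg_ne_zero.mpr hb) ha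
  have hχ : quadraticChar F (-b / a) * quadraticChar F b =
      quadraticChar F (-1) * quadraticChar F a := by
    rw [← map_mul, ← map_mul, show -b / a * b = -1 * a * (b / a) ^ 2 by field_simp,
      map_mul _ _ ((b / a) ^ 2), quadraticChar_sq_one' (div_ne_zero hb ha), mul_one]
  calc ∑ s : F, quadraticChar F s * quadraticChar F (a * s + b)
      = ∑ x : F, quadraticChar F (-b / a * x) * quadraticChar F (a * (-b / a * x) + b) :=
        (Fintype.sum_equiv (Equiv.mulLeft₀ _ hc) _ _ fun _ ↦ rfl).symm
    _ = ∑ x : F, quadraticChar F (-1) * quadraticChar F a *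
          (quadraticChar F x * quadraticChar F (1 - x)) := by
        refine sum_congr rfl fun x _ ↦ ?_
        rw [show a * (-b / a * x) + b = b * (1 - x) by field_simp; ring, map_mul, map_mul, ← hχ]
        ring
    _ = -quadraticChar F a := by
        rw [← mul_sum, sum_quadraticChar_mul_quadraticChar_one_sub hF]
        linear_combination
          -quadraticChar F a * quadraticChar_sq_one (neg_ne_zero.mpr (one_ne_zero (α := F)))

lemma sum_quadraticChar_mul_sq_add (hF : ringChar F ≠ 2) {a b : F} (ha : a ≠ 0) (hb : b ≠ 0) :
    ∑ t : F, quadraticChar F (a * t ^ 2 + b) = -quadraticChar F a := by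
  simp_rw [sum_comp_sq_eq_sum_quadraticChar_add_one_mul hF (fun s ↦ quadraticChar F (a * s + b)),
    add_one_mul, sum_add_distrib, sum_quadraticChar_mul_quadraticChar_affine hF ha hb,
    sum_quadraticChar_affine hF ha, add_zero]

lemma sum_quadraticChar_cubic_eq_sum_rescaled (hF : ringChar F ≠ 2) (t : F) :
    ∑ x : F, quadraticChar F (x ^ 3 - t ^ 2 * x + t ^ 4) =
      ∑ u : F, quadraticChar F (u ^ 3 * t ^ 2 + (1 - u)) := by
  rcases eq_or_ne t 0 with rfl | ht
  · simp only [zero_pow two_ne_zero, zero_pow four_ne_zero, zero_mul, mul_zero, sub_zero, add_zero,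
      zero_add, quadraticChar_pow_three, quadraticChar_sum_zero hF]
    exact ((Fintype.sum_equiv (Equiv.subLeft 1) _ _ fun _ ↦ rfl).trans
      (quadraticChar_sum_zero hF)).symm
  · have ht2 : t ^ 2 ≠ 0 := pow_ne_zero 2 ht
    refine (Fintype.sum_bijective (t ^ 2 * ·) (mulLeft_bijective₀ _ ht2) _ _ fun u ↦ ?_).symm
    rw [show (t ^ 2 * u) ^ 3 - t ^ 2 * (t ^ 2 * u) + t ^ 4 =
      (t ^ 2) ^ 2 * (u ^ 3 * t ^ 2 + (1 - u)) by ring, map_mul, quadraticChar_sq_one' ht2, one_mul]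

lemma sum_quadraticChar_pow_three_mul_sq_add_one_sub (hF : ringChar F ≠ 2) (u : F) :
    ∑ t : F, quadraticChar F (u ^ 3 * t ^ 2 + (1 - u)) = -quadraticChar F u +
      ((if u = 0 then (Fintype.card F : ℤ) else 0) +
        if u = 1 then (Fintype.card F : ℤ) else 0) := by
  rcases eq_or_ne u 0 with rfl | hu0
  · simp only [zero_pow three_ne_zero, zero_mul, sub_zero, zero_add, map_one, sum_const, card_univ,
      nsmul_one, quadraticChar_zero, if_true, if_neg zero_ne_one]
    ring
  rcases eq_or_ne u 1 with rfl | hu1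
  · simp only [one_pow, one_mul, sub_self, add_zero, sum_quadraticChar_sq, if_neg one_ne_zero,
      if_true, map_one, zero_add]
    ring
  · rw [sum_quadraticChar_mul_sq_add hF (pow_ne_zero 3 hu0) (sub_ne_zero.mpr hu1.symm),
      quadraticChar_pow_three, if_neg hu0, if_neg hu1, add_zero, add_zero]

theorem sum_sum_quadraticChar_cubic_family (hF : ringChar F ≠ 2) :
    ∑ t : F, ∑ x : F, quadraticChar F (x ^ 3 - t ^ 2 * x + t ^ 4) = 2 * Fintype.card F := by
  simp_rw [sum_quadraticChar_cubic_eq_sum_rescaled hF]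
  rw [sum_comm]
  simp_rw [sum_quadraticChar_pow_three_mul_sq_add_one_sub hF, sum_add_distrib, sum_neg_distrib,
    quadraticChar_sum_zero hF, sum_ite_eq', mem_univ, if_true]
  ring

end QuadraticCharSums

/-- For a prime `p > 3` and the one-parameter family
`y² = x³ - t² x + t⁴`, the first-moment sum equals `-2p`. -/
theorem first_moment_family_five (p : ℕ) [Fact p.Prime] (hp : 3 < p) :
    ∑ t : ZMod p,
      (-∑ x : ZMod p,
        legendreSym p ((x.val : ℤ) ^ 3 - (t.val : ℤ) ^ 2 * (x.val : ℤ)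
          + (t.val : ℤ) ^ 4)) = -2 * (p : ℤ) := by
  have hF : ringChar (ZMod p) ≠ 2 := by rw [ZMod.ringChar_zmod_n]; omega
  simp only [legendreSym, Int.cast_add, Int.cast_sub, Int.cast_mul, Int.cast_pow, Int.cast_natCast,
    ZMod.natCast_zmod_val]
  rw [sum_neg_distrib, sum_sum_quadraticChar_cubic_family hF, ZMod.card]
  ring
end
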